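/- Let μ be a reconciliation map from a gene tree (T,t,σ) to a species tree S on B. For p a vertex or edge of S, let v(p) denote p itself if p is a vertex, and the lower endpoint v if p = [u,v] is an edge. Then for all vertices x, y of T: lca_S(v(μ(x)), v(μ(y))) ≼_S v(μ(lca_T(x,y))); that is, the last common ancestor in S of the images of x and y lies below the image of the last common ancestor of x and y in T. -/
import Mathlib


/-- Event labels for the vertices of a gene tree: speciation `•`,
duplication `□`, and extant gene (leaf) `⊙`. -/
inductive Event : Type
  | spec : Event
  | dup : Event
  | leaf : Event
deriving DecidableEq

/-- A rooted tree structure on a partially ordered set: there is a greatest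
element (the root) and the set of ancestors of every element is a chain.
(Finiteness is imposed via a `Fintype` instance.) -/
def IsRootedTree (V : Type*) [PartialOrder V] : Prop :=
  (∃ ρ : V, IsTop ρ) ∧ ∀ x : V, IsChain (· ≤ ·) {y : V | x ≤ y}

/-- `L(x)`: the set of leaves (minimal elements) lying below `x`. -/
def leavesBelow {V : Type*} [PartialOrder V] (x : V) : Set V :=
  {y : V | IsMin y ∧ y ≤ x}

/-- A phylogenetic tree: a rooted tree in which every non-leaf vertex covers
at least two vertices. -/
def IsPhyloTree (V : Type*) [PartialOrder V] : Prop :=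
  IsRootedTree V ∧ ∀ x : V, ¬ IsMin x → ∃ c c' : V, c ≠ c' ∧ c ⋖ x ∧ c' ⋖ x

/-- A species tree: a rooted tree whose root covers exactly one vertex and in
which every non-leaf vertex other than the root covers at least two vertices. -/
def IsSpeciesTree (W : Type*) [PartialOrder W] : Prop :=
  IsRootedTree W ∧
  (∀ ρ : W, IsTop ρ → ∃! v : W, v ⋖ ρ) ∧
  (∀ x : W, ¬ IsMin x → ¬ IsTop x → ∃ c c' : W, c ≠ c' ∧ c ⋖ x ∧ c' ⋖ x)

/-- A rooted tree (on its vertex type) displays the triple `((a,b),c)`, i.e.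
`lca(a,b) ≺ lca({a,b,c})`. -/
def Displays {W : Type*} [PartialOrder W] (a b c : W) : Prop :=
  ∃ w₁ w₂ : W, IsLUB ({a, b} : Set W) w₁ ∧ IsLUB ({a, b, c} : Set W) w₂ ∧ w₁ < w₂

/-- Condition (C): the sets of species below distinct children of a
speciation vertex are disjoint. -/
def CondC {V B : Type*} [PartialOrder V] (t : V → Event) (σ : V → B) : Prop :=
  ∀ z c c' : V, t z = Event.spec → c ⋖ z → c' ⋖ z → c ≠ c' →
    σ '' leavesBelow c ∩ σ '' leavesBelow c' = ∅

/-- `(T,t,σ)` is a gene tree over the (abstract) species set `B`: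
`T` is a phylogenetic tree with at least three leaves, `t` labels exactly the
leaves with `⊙`, `σ` maps the leaves onto `B`, and condition (C) holds. -/
def IsGeneTree {V B : Type*} [PartialOrder V] (t : V → Event) (σ : V → B) : Prop :=
  IsPhyloTree V ∧ 3 ≤ {x : V | IsMin x}.ncard ∧
  (∀ x : V, t x = Event.leaf ↔ IsMin x) ∧
  (∀ b : B, ∃ x : V, IsMin x ∧ σ x = b) ∧
  CondC t σ

/-- `(T,t,σ)` is a gene tree whose species set `B` is the leaf set of the
species tree with vertex set `W`: `σ` maps the leaves of `T` onto the leaves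
of `W`. -/
def IsGeneTreeOver {V W : Type*} [PartialOrder V] [PartialOrder W]
    (t : V → Event) (σ : V → W) : Prop :=
  IsPhyloTree V ∧ 3 ≤ {x : V | IsMin x}.ncard ∧
  (∀ x : V, t x = Event.leaf ↔ IsMin x) ∧
  (∀ x : V, IsMin x → IsMin (σ x)) ∧
  (∀ b : W, IsMin b → ∃ x : V, IsMin x ∧ σ x = b) ∧
  CondC t σ

/-- The edges `[u,v]` of a species tree: pairs whose first component `u`
covers the second component `v` (so `.1` is the upper and `.2` the lower
endpoint of the edge). -/
abbrev SEdge (W : Type*) [PartialOrder W] : Type _ := {p : W × W // p.2 ⋖ p.1}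

/-- The (non-strict) extension `≼` of the species-tree order to `W ∪ H`. -/
def extLE {W : Type*} [PartialOrder W] : W ⊕ SEdge W → W ⊕ SEdge W → Prop
  | Sum.inl x, Sum.inl y => x ≤ y
  | Sum.inl x, Sum.inr e => x ≤ e.1.2
  | Sum.inr e, Sum.inl y => e.1.1 ≤ y
  | Sum.inr e, Sum.inr f => e.1.2 ≤ f.1.2

/-- The strict extension `≺` of the species-tree order to `W ∪ H`. -/
def extLT {W : Type*} [PartialOrder W] : W ⊕ SEdge W → W ⊕ SEdge W → Prop
  | Sum.inl x, Sum.inl y => x < y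
  | Sum.inl x, Sum.inr e => x ≤ e.1.2
  | Sum.inr e, Sum.inl y => e.1.1 ≤ y
  | Sum.inr e, Sum.inr f => e.1.2 < f.1.2

/-- `μ` is a reconciliation map from the gene tree `(T,t,σ)` to the species
tree on `W` (with edge set `SEdge W`); the leaves of `W` play the role of the
species set `B`. -/
def IsReconMap {V W : Type*} [PartialOrder V] [PartialOrder W]
    (t : V → Event) (σ : V → W) (μ : V → W ⊕ SEdge W) : Prop :=
  (∀ x : V, t x = Event.leaf → μ x = Sum.inl (σ x)) ∧
  (∀ x : V, t x = Event.spec → ∃ w : W, ¬ IsMin w ∧ μ x = Sum.inl w) ∧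
  (∀ x : V, t x = Event.dup → ∃ e : SEdge W, μ x = Sum.inr e) ∧
  (∀ x y : V, x < y → t x = Event.dup → t y = Event.dup → extLE (μ x) (μ y)) ∧
  (∀ x y : V, x < y → ¬ (t x = Event.dup ∧ t y = Event.dup) →
    extLT (μ x) (μ y)) ∧
  (∀ x : V, t x = Event.spec →
    ∃ w : W, IsLUB (σ '' leavesBelow x) w ∧ μ x = Sum.inl w)

/-- Membership of the triple `((x,y),z)` in `𝔊(T,t,σ)`: a triple of leaves
displayed by `T`, rooted in a speciation vertex, whose species are pairwise
distinct. -/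
def TripleInG {V B : Type*} [PartialOrder V] (t : V → Event) (σ : V → B)
    (x y z : V) : Prop :=
  IsMin x ∧ IsMin y ∧ IsMin z ∧
  (∃ w₁ w₂ : V, IsLUB ({x, y} : Set V) w₁ ∧ IsLUB ({x, y, z} : Set V) w₂ ∧
    w₁ < w₂ ∧ t w₂ = Event.spec) ∧
  σ x ≠ σ y ∧ σ y ≠ σ z ∧ σ x ≠ σ z

/-- The point of the species tree associated with a vertex or an edge:
a vertex is sent to itself, an edge `[u,v]` to its lower endpoint `v`. -/
def lowPoint {W : Type*} [PartialOrder W] : W ⊕ SEdge W → W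
  | Sum.inl w => w
  | Sum.inr e => e.1.2

/-- Lemma 2.  A reconciliation map preserves last common
ancestors in the following sense: for all vertices `x, y` of the gene tree,
`lca_S(v(μ x), v(μ y)) ≼_S v(μ(lca_T(x,y)))`. -/
theorem lca_below_image_of_lca
    {V W : Type*} [PartialOrder V] [Fintype V] [PartialOrder W] [Fintype W]
    (t : V → Event) (σ : V → W) (μ : V → W ⊕ SEdge W)
    (hT : IsGeneTreeOver t σ) (hS : IsSpeciesTree W)
    (hμ : IsReconMap t σ μ) :
    ∀ x y : V, ∀ p : V, IsLUB ({x, y} : Set V) p →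
      ∀ s : W, IsLUB ({lowPoint (μ x), lowPoint (μ y)} : Set W) s →
        s ≤ lowPoint (μ p) := by
  have hLE : ∀ a b : W ⊕ SEdge W, extLE a b → lowPoint a ≤ lowPoint b := by
    rintro (a | a) (b | b) h
    · exact h
    · exact h
    · exact le_trans (le_of_lt a.2.lt) h
    · exact h
  have hLT : ∀ a b : W ⊕ SEdge W, extLT a b → lowPoint a ≤ lowPoint b := by
    rintro (a | a) (b | b) h
    · exact le_of_lt h
    · exact h
    · exact le_trans (le_of_lt a.2.lt) h
    · exact le_of_lt h
  intro x y p hp s hs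
  have key : ∀ z : V, z ≤ p → lowPoint (μ z) ≤ lowPoint (μ p) := by
    intro z hz
    rcases eq_or_lt_of_le hz with rfl | hz
    · exact le_refl _
    by_cases hd : t z = Event.dup ∧ t p = Event.dup
    · exact hLE _ _ (hμ.2.2.2.1 z p hz hd.1 hd.2)
    · exact hLT _ _ (hμ.2.2.2.2.1 z p hz hd)
  refine hs.2 ?_
  rintro w (rfl | rfl)
  · exact key x (hp.1 (by simp))
  · exact key y (hp.1 (by simp))
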